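/- Assume γ = t_m, and let H_m^R denote the top-left m×m submatrix of H with its (m,m) entry z_m replaced by Δ = Re z_m. Then det(λ·1_n − H) = det(λ·1_m − H_m^R)²; in particular the characteristic polynomial of H is the square of a monic degree-m polynomial with real coefficients, and, since H_m^R is a real symmetric matrix, every eigenvalue of H is real and has algebraic multiplicity at least two. -/

import Mathlib

/-
Split `H` into `m × m` blocks `[[A, B], [C, D]]` and let `J` be the reversal matrix. The mirror
symmetry of `t` and `z` gives `D = J Ā J`, while `B` and `C` each carry the single coupling `t_m`.
With `R = H_m^R` and `X = i J`, the choice `γ = t_m` is exactly what makes `A = R + B X`,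
`D = J R J - X B` and `C = J B J`; these say that conjugating `H` by the shear `[[1, 0], [X, 1]]`
gives a block upper triangular matrix with diagonal blocks `R` and `J R J`, so
`det(λ - H) = det(λ - R)²`. As `R` is real symmetric, all its eigenvalues are real.
-/

open Matrix Complex

/-- The `2m × 2m` tridiagonal Hamiltonian with diagonal entries `z 1, …, z n`
(1-based) and symmetric off-diagonal entries `t 1, …, t (n-1)`. -/
noncomputable def Hop (m : ℕ) (t : ℕ → ℝ) (z : ℕ → ℂ) :
    Matrix (Fin (2*m)) (Fin (2*m)) ℂ :=
  fun i j =>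
    if (i : ℕ) = (j : ℕ) then z ((i : ℕ) + 1)
    else if (i : ℕ) + 1 = (j : ℕ) then ((t ((i : ℕ) + 1) : ℝ) : ℂ)
    else if (j : ℕ) + 1 = (i : ℕ) then ((t ((j : ℕ) + 1) : ℝ) : ℂ)
    else 0

/-- The block matrix `M(Z) = [[1, (conj Z / t_m) P_m],[(Z / t_m) P_m, 1]]`. -/
noncomputable def Mop (m : ℕ) (t : ℕ → ℝ) (Z : ℂ) :
    Matrix (Fin (2*m)) (Fin (2*m)) ℂ :=
  fun i j =>
    if i = j then 1
    else if (i : ℕ) + (j : ℕ) + 1 = 2*m then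
      (if (i : ℕ) < m then (starRingEnd ℂ) Z / (t m : ℂ) else Z / (t m : ℂ))
    else 0

/-- The top-left `(m−1) × (m−1)` submatrix of `H`. -/
noncomputable def HopSub (m : ℕ) (t : ℕ → ℝ) (z : ℕ → ℂ) :
    Matrix (Fin (m-1)) (Fin (m-1)) ℂ :=
  (Hop m t z).submatrix (Fin.castLE (by omega)) (Fin.castLE (by omega))

/-- The top-left `m × m` submatrix of `H` with its `(m,m)` entry `z m`
replaced by `Δ = Re (z m)`. -/
noncomputable def HmR (m : ℕ) (t : ℕ → ℝ) (z : ℕ → ℂ) :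
    Matrix (Fin m) (Fin m) ℂ :=
  fun i j =>
    if (i : ℕ) = m - 1 ∧ (j : ℕ) = m - 1 then (((z m).re : ℝ) : ℂ)
    else Hop m t z (Fin.castLE (by omega) i) (Fin.castLE (by omega) j)

open Polynomial

namespace Matrix

variable {K : Type*} [CommRing K] {n o : Type*} [Fintype n] [DecidableEq n] [Fintype o]
  [DecidableEq o]

theorem charpoly_fromBlocks_of_shear (A : Matrix n n K) (B : Matrix n o K) (C : Matrix o n K)
    (D : Matrix o o K) (X : Matrix o n K) (h : X * A + C = (X * B + D) * X) :
    (fromBlocks A B C D).charpoly = (A - B * X).charpoly * (X * B + D).charpoly := by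
  let S : Matrix (n ⊕ o) (n ⊕ o) K := fromBlocks 1 0 X 1
  let S' : Matrix (n ⊕ o) (n ⊕ o) K := fromBlocks 1 0 (-X) 1
  have hinv : S' * S = 1 := by
    simp [S, S', fromBlocks_multiply, ← fromBlocks_one]
  have hconj : S * fromBlocks A B C D * S' = fromBlocks (A - B * X) B 0 (X * B + D) := by
    simp only [S, S', fromBlocks_multiply, Matrix.one_mul, Matrix.zero_mul, Matrix.mul_one,
      Matrix.mul_zero, add_zero, zero_add, Matrix.mul_neg, ← sub_eq_add_neg, Matrix.add_mul, h,
      sub_self]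
  rw [← charpoly_fromBlocks_zero₂₁, ← hconj, charpoly_mul_comm, ← Matrix.mul_assoc, hinv,
    Matrix.one_mul]

theorem charpoly_fromBlocks_eq_sq_of_involutive (P R B : Matrix n n K) (hP : P * P = 1) (c : K)
    (hc : c * c = -1) :
    (fromBlocks (R + c • (B * P)) B (P * B * P) (P * R * P - c • (P * B))).charpoly =
      R.charpoly ^ 2 := by
  have hshear : c • P * (R + c • (B * P)) + P * B * P =
      (c • P * B + (P * R * P - c • (P * B))) * (c • P) := by
    simp [Matrix.mul_add, Matrix.mul_assoc, hP, smul_smul, hc]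
  rw [charpoly_fromBlocks_of_shear _ _ _ _ _ hshear, Matrix.smul_mul, Matrix.mul_smul,
    add_sub_cancel_right, add_sub_cancel, charpoly_mul_comm, ← Matrix.mul_assoc, hP,
    Matrix.one_mul, sq]

end Matrix

theorem Matrix.IsHermitian.im_eq_zero_of_isRoot_charpoly {n : Type*} [Fintype n] [DecidableEq n]
    {A : Matrix n n ℂ} (hA : A.IsHermitian) {μ : ℂ} (hμ : A.charpoly.IsRoot μ) : μ.im = 0 := by
  have hmem : μ ∈ A.charpoly.roots := (Polynomial.mem_roots A.charpoly_monic.ne_zero).mpr hμ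
  rw [hA.roots_charpoly_eq_eigenvalues] at hmem
  obtain ⟨i, -, rfl⟩ := Multiset.mem_map.mp hmem
  simp

theorem Polynomial.rootMultiplicity_sq {R : Type*} [CommRing R] [IsDomain R] {p : Polynomial R}
    (hp : p ≠ 0) (x : R) : (p ^ 2).rootMultiplicity x = 2 * p.rootMultiplicity x := by
  rw [sq, Polynomial.rootMultiplicity_mul (mul_ne_zero hp hp), two_mul]

section Reversal

variable {m : ℕ} {α : Type*} [NonAssocSemiring α]

theorem revPerm_permMatrix_mul (M : Matrix (Fin m) (Fin m) α) :
    Fin.revPerm.permMatrix α * M = M.submatrix Fin.rev id :=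
  PEquiv.toMatrix_toPEquiv_mul _ _

theorem mul_revPerm_permMatrix (M : Matrix (Fin m) (Fin m) α) :
    M * Fin.revPerm.permMatrix α = M.submatrix id Fin.rev := by
  rw [PEquiv.mul_toMatrix_toPEquiv, Fin.revPerm_symm]; rfl

theorem revPerm_permMatrix_mul_self :
    Fin.revPerm.permMatrix α * Fin.revPerm.permMatrix α = (1 : Matrix (Fin m) (Fin m) α) := by
  rw [revPerm_permMatrix_mul]
  ext i j
  simp [Matrix.one_apply]

end Reversal

section Tridiagonal

variable {m : ℕ} {t : ℕ → ℝ} {z : ℕ → ℂ}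

-- The entries of `Hop` at 0-based natural-number indices, so that block entries avoid `Fin` casts.
variable (t z) in
def hopEntry (a b : ℕ) : ℂ :=
  if a = b then z (a + 1)
  else if a + 1 = b then ((t (a + 1) : ℝ) : ℂ)
  else if b + 1 = a then ((t (b + 1) : ℝ) : ℂ)
  else 0

variable (m t z) in
theorem HmR_apply (i j : Fin m) :
    HmR m t z i j = if (i : ℕ) = m - 1 ∧ (j : ℕ) = m - 1 then (((z m).re : ℝ) : ℂ)
      else hopEntry t z i j := rfl

theorem hopEntry_comm (a b : ℕ) : hopEntry t z a b = hopEntry t z b a := by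
  unfold hopEntry
  split_ifs <;> first | rfl | omega | (subst_vars; rfl)

theorem hopEntry_self (a : ℕ) : hopEntry t z a a = z (a + 1) := if_pos rfl

theorem hopEntry_of_succ_eq {a b : ℕ} (h : a + 1 = b) : hopEntry t z a b = ((t b : ℝ) : ℂ) := by
  subst h; simp [hopEntry]

theorem hopEntry_of_eq_succ {a b : ℕ} (h : a = b + 1) : hopEntry t z a b = ((t a : ℝ) : ℂ) := by
  rw [hopEntry_comm, hopEntry_of_succ_eq h.symm]

theorem hopEntry_eq_zero {a b : ℕ} (h : a + 1 < b ∨ b + 1 < a) : hopEntry t z a b = 0 := by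
  unfold hopEntry
  split_ifs <;> first | rfl | omega

theorem hopEntry_im_eq_zero
    (hzreal : ∀ j, 1 ≤ j → j ≤ 2*m → j ≠ m → j ≠ m + 1 → (z j).im = 0) {a b : ℕ}
    (hb : b < 2 * m) (hab : a = b → a + 1 ≠ m ∧ a ≠ m) : (hopEntry t z a b).im = 0 := by
  unfold hopEntry
  split_ifs with h
  · exact hzreal _ (by omega) (by omega) (hab h).1 (by omega)
  all_goals simp

theorem hopEntry_reflect
    (htsym : ∀ j, 1 ≤ j → j ≤ 2*m - 1 → t j = t (2*m - j))
    (hzsym : ∀ j, 1 ≤ j → j ≤ 2*m → z (2*m + 1 - j) = (starRingEnd ℂ) (z j)) {a b : ℕ}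
    (ha : a < 2 * m) (hb : b < 2 * m) :
    hopEntry t z (2 * m - 1 - a) (2 * m - 1 - b) = (starRingEnd ℂ) (hopEntry t z a b) := by
  unfold hopEntry
  split_ifs <;> try omega
  · rw [show 2 * m - 1 - a + 1 = 2 * m + 1 - (a + 1) by omega]
    exact hzsym _ (by omega) (by omega)
  · rw [Complex.conj_ofReal, htsym (b + 1) (by omega) (by omega)]
    congr 3; omega
  · rw [Complex.conj_ofReal, htsym (a + 1) (by omega) (by omega)]
    congr 3; omega
  · simp

def finSumFinEquivTwoMul (m : ℕ) : Fin m ⊕ Fin m ≃ Fin (2 * m) :=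
  finSumFinEquiv.trans (finCongr (two_mul m).symm)

variable (m t z) in
noncomputable def hopBlocks : Matrix (Fin m ⊕ Fin m) (Fin m ⊕ Fin m) ℂ :=
  (Hop m t z).submatrix (finSumFinEquivTwoMul m) (finSumFinEquivTwoMul m)

theorem toBlocks₁₂_hopBlocks_apply (i j : Fin m) :
    (hopBlocks m t z).toBlocks₁₂ i j = hopEntry t z i (m + j) := rfl

theorem toBlocks₁₁_hopBlocks (hγ_eq : (z m).im = t m) :
    (hopBlocks m t z).toBlocks₁₁ =
      HmR m t z + Complex.I • ((hopBlocks m t z).toBlocks₁₂ * Fin.revPerm.permMatrix ℂ) := by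
  ext i j
  have hi := i.isLt; have hj := j.isLt
  simp only [mul_revPerm_permMatrix, Matrix.add_apply, Matrix.smul_apply, submatrix_apply, id_eq,
    toBlocks₁₂_hopBlocks_apply, HmR_apply, Fin.val_rev, smul_eq_mul]
  change hopEntry t z i j = _
  by_cases hc : (i : ℕ) = m - 1 ∧ (j : ℕ) = m - 1
  · rw [if_pos hc, hc.1, hc.2, hopEntry_self, Nat.sub_add_cancel (by omega),
      hopEntry_of_succ_eq (by omega), Nat.sub_self, add_zero]
    apply Complex.ext <;> simp [hγ_eq]
  · rw [if_neg hc, hopEntry_eq_zero (a := i) (b := m + (m - (j + 1))) (by omega), mul_zero,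
      add_zero]

theorem toBlocks₂₁_hopBlocks :
    (hopBlocks m t z).toBlocks₂₁ =
      Fin.revPerm.permMatrix ℂ * (hopBlocks m t z).toBlocks₁₂ * Fin.revPerm.permMatrix ℂ := by
  ext i j
  have hi := i.isLt; have hj := j.isLt
  rw [mul_revPerm_permMatrix, revPerm_permMatrix_mul, submatrix_apply, submatrix_apply, id, id,
    toBlocks₁₂_hopBlocks_apply, Fin.val_rev, Fin.val_rev]
  change hopEntry t z (m + i) j = _
  by_cases hc : (i : ℕ) = 0 ∧ (j : ℕ) = m - 1
  · rw [hopEntry_of_eq_succ (by omega), hopEntry_of_succ_eq (by omega)]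
    congr 3; omega
  · rw [hopEntry_eq_zero (by omega), hopEntry_eq_zero (by omega)]

theorem toBlocks₂₂_hopBlocks
    (htsym : ∀ j, 1 ≤ j → j ≤ 2*m - 1 → t j = t (2*m - j))
    (hzreal : ∀ j, 1 ≤ j → j ≤ 2*m → j ≠ m → j ≠ m + 1 → (z j).im = 0)
    (hzsym : ∀ j, 1 ≤ j → j ≤ 2*m → z (2*m + 1 - j) = (starRingEnd ℂ) (z j))
    (hγ_eq : (z m).im = t m) :
    (hopBlocks m t z).toBlocks₂₂ =
      Fin.revPerm.permMatrix ℂ * HmR m t z * Fin.revPerm.permMatrix ℂ -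
        Complex.I • (Fin.revPerm.permMatrix ℂ * (hopBlocks m t z).toBlocks₁₂) := by
  ext i j
  have hi := i.isLt; have hj := j.isLt
  simp only [mul_revPerm_permMatrix, revPerm_permMatrix_mul, Matrix.sub_apply, Matrix.smul_apply,
    submatrix_apply, id_eq, toBlocks₁₂_hopBlocks_apply, HmR_apply, Fin.val_rev, smul_eq_mul]
  have hreflect : hopEntry t z (m + i) (m + j) =
      (starRingEnd ℂ) (hopEntry t z (m - (i + 1)) (m - (j + 1))) := by
    rw [← hopEntry_reflect htsym hzsym (by omega) (by omega)]
    congr 1 <;> omega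
  change hopEntry t z (m + i) (m + j) = _
  rw [hreflect]
  by_cases hc : m - ((i : ℕ) + 1) = m - 1 ∧ m - ((j : ℕ) + 1) = m - 1
  · rw [if_pos hc, hc.1, hc.2, hopEntry_self, Nat.sub_add_cancel (by omega),
      hopEntry_of_succ_eq (by omega), show m + (j : ℕ) = m by omega]
    apply Complex.ext <;> simp [hγ_eq]
  · have hreal : (hopEntry t z (m - (i + 1)) (m - (j + 1))).im = 0 :=
      hopEntry_im_eq_zero hzreal (by omega) (by omega)
    rw [if_neg hc, Complex.conj_eq_iff_im.mpr hreal,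
      hopEntry_eq_zero (a := m - (i + 1)) (b := m + j) (by omega), mul_zero, sub_zero]

theorem Hop_charpoly_eq_sq
    (htsym : ∀ j, 1 ≤ j → j ≤ 2*m - 1 → t j = t (2*m - j))
    (hzreal : ∀ j, 1 ≤ j → j ≤ 2*m → j ≠ m → j ≠ m + 1 → (z j).im = 0)
    (hzsym : ∀ j, 1 ≤ j → j ≤ 2*m → z (2*m + 1 - j) = (starRingEnd ℂ) (z j))
    (hγ_eq : (z m).im = t m) :
    (Hop m t z).charpoly = (HmR m t z).charpoly ^ 2 := by
  rw [← charpoly_reindex (finSumFinEquivTwoMul m).symm (Hop m t z)]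
  change (hopBlocks m t z).charpoly = _
  rw [← fromBlocks_toBlocks (hopBlocks m t z), toBlocks₁₁_hopBlocks hγ_eq, toBlocks₂₁_hopBlocks,
    toBlocks₂₂_hopBlocks htsym hzreal hzsym hγ_eq]
  exact charpoly_fromBlocks_eq_sq_of_involutive _ _ _ revPerm_permMatrix_mul_self _ Complex.I_mul_I

theorem HmR_im_eq_zero
    (hzreal : ∀ j, 1 ≤ j → j ≤ 2*m → j ≠ m → j ≠ m + 1 → (z j).im = 0) (i j : Fin m) :
    (HmR m t z i j).im = 0 := by
  have hi := i.isLt; have hj := j.isLt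
  rw [HmR_apply]
  split_ifs with hc
  · exact Complex.ofReal_im _
  · exact hopEntry_im_eq_zero hzreal (by omega) (by omega)

theorem HmR_eq_map_re
    (hzreal : ∀ j, 1 ≤ j → j ≤ 2*m → j ≠ m → j ≠ m + 1 → (z j).im = 0) :
    HmR m t z = ((HmR m t z).map Complex.re).map (algebraMap ℝ ℂ) := by
  ext i j
  exact Complex.ext (by simp) (by simp [HmR_im_eq_zero hzreal])

theorem HmR_isHermitian
    (hzreal : ∀ j, 1 ≤ j → j ≤ 2*m → j ≠ m → j ≠ m + 1 → (z j).im = 0) :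
    (HmR m t z).IsHermitian := by
  ext i j
  rw [conjTranspose_apply, Complex.star_def, Complex.conj_eq_iff_im.mpr (HmR_im_eq_zero hzreal j i),
    HmR_apply, HmR_apply, hopEntry_comm]
  simp only [and_comm]

end Tridiagonal

theorem stmt8 (m : ℕ) (t : ℕ → ℝ) (z : ℕ → ℂ)
    (htsym : ∀ j, 1 ≤ j → j ≤ 2*m - 1 → t j = t (2*m - j))
    (hzreal : ∀ j, 1 ≤ j → j ≤ 2*m → j ≠ m → j ≠ m + 1 → (z j).im = 0)
    (hzsym : ∀ j, 1 ≤ j → j ≤ 2*m → z (2*m + 1 - j) = (starRingEnd ℂ) (z j))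
    (hγ_eq : (z m).im = t m) :
    (Hop m t z).charpoly = (HmR m t z).charpoly ^ 2 ∧
      (∃ q : Polynomial ℝ, q.Monic ∧ q.natDegree = m ∧
        (Hop m t z).charpoly = (q.map (algebraMap ℝ ℂ)) ^ 2) ∧
      (∀ μ ∈ spectrum ℂ (Hop m t z),
        μ.im = 0 ∧ 2 ≤ (Hop m t z).charpoly.rootMultiplicity μ) := by
  have hsq := Hop_charpoly_eq_sq htsym hzreal hzsym hγ_eq
  have hne : (HmR m t z).charpoly ≠ 0 := (charpoly_monic _).ne_zero
  refine ⟨hsq, ⟨((HmR m t z).map Complex.re).charpoly, charpoly_monic _, by simp, ?_⟩, ?_⟩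
  · rw [hsq, ← charpoly_map, ← HmR_eq_map_re hzreal]
  intro μ hμ
  have hroot : (HmR m t z).charpoly.IsRoot μ := by
    rwa [mem_spectrum_iff_isRoot_charpoly, hsq, IsRoot, eval_pow, pow_eq_zero_iff two_ne_zero] at hμ
  refine ⟨(HmR_isHermitian hzreal).im_eq_zero_of_isRoot_charpoly hroot, ?_⟩
  rw [hsq, rootMultiplicity_sq hne]
  have hpos := (rootMultiplicity_pos hne).mpr hroot
  omega
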